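/- Let (G,m,w,B) be a connected weighted finite graph with boundary. Then the equality μ_{i+|B|} = λ_i cannot hold simultaneously for all i = 1, 2, …, |Ω|. -/

import Mathlib

open Finset

noncomputable section

/-- The weighted graph Laplacian `Δ`. -/
def glap {V : Type*} [Fintype V] (m : V → ℝ) (w : V → V → ℝ) (u : V → ℝ) (x : V) : ℝ :=
  (1 / m x) * ∑ y, (u y - u x) * w x y

/-- Extension by zero to the boundary. -/
def E0 {V : Type*} [DecidableEq V] (B : Finset V) (u : {x : V // x ∉ B} → ℝ) (x : V) : ℝ :=
  if h : x ∈ B then 0 else u ⟨x, h⟩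

/-- The normal extension. -/
def N0 {V : Type*} [Fintype V] [DecidableEq V] (w : V → V → ℝ) (B : Finset V)
    (u : {x : V // x ∉ B} → ℝ) (x : V) : ℝ :=
  if h : x ∈ B then
    (∑ y : {x : V // x ∉ B}, u y * w x y.1) / (∑ y : {x : V // x ∉ B}, w x y.1)
  else u ⟨x, h⟩

/-- The Dirichlet Laplacian `Δ^D`. -/
def dlap {V : Type*} [Fintype V] [DecidableEq V] (m : V → ℝ) (w : V → V → ℝ) (B : Finset V)
    (u : {x : V // x ∉ B} → ℝ) (x : {x : V // x ∉ B}) : ℝ :=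
  glap m w (E0 B u) x.1

/-- The Neumann Laplacian `Δ^N`. -/
def nlap {V : Type*} [Fintype V] [DecidableEq V] (m : V → ℝ) (w : V → V → ℝ) (B : Finset V)
    (u : {x : V // x ∉ B} → ℝ) (x : {x : V // x ∉ B}) : ℝ :=
  glap m w (N0 w B u) x.1

/-- The Laplacian `Δ_Ω` of the induced interior subgraph. -/
def olap {V : Type*} [Fintype V] [DecidableEq V] (m : V → ℝ) (w : V → V → ℝ) (B : Finset V)
    (u : {x : V // x ∉ B} → ℝ) (x : {x : V // x ∉ B}) : ℝ :=
  (1 / m x.1) * ∑ y : {x : V // x ∉ B}, (u y - u x) * w x.1 y.1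

/-- The weighted boundary vertex degree `Deg_b`. -/
def degb {V : Type*} [DecidableEq V] (m : V → ℝ) (w : V → V → ℝ) (B : Finset V) (x : V) : ℝ :=
  (1 / m x) * ∑ y ∈ B, w x y

/-- The operator `T = A_B ∘ Deg⁻¹ ∘ A_Ω`. -/
def bop {V : Type*} [Fintype V] [DecidableEq V] (m : V → ℝ) (w : V → V → ℝ) (B : Finset V)
    (u : {x : V // x ∉ B} → ℝ) (z : {x : V // x ∉ B}) : ℝ :=
  (1 / m z.1) * ∑ x ∈ B, w x z.1 *
    ((∑ y : {x : V // x ∉ B}, u y * w x y.1) / (∑ y : {x : V // x ∉ B}, w x y.1))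

/-- The Bakry–Émery `Γ` operator of a Laplacian-type operator `L`. -/
def gam {W : Type*} (L : (W → ℝ) → (W → ℝ)) (f g : W → ℝ) (x : W) : ℝ :=
  (L (fun y => f y * g y) x - f x * L g x - g x * L f x) / 2

/-- The Bakry–Émery `Γ₂` operator of a Laplacian-type operator `L`. -/
def gam2 {W : Type*} (L : (W → ℝ) → (W → ℝ)) (f : W → ℝ) (x : W) : ℝ :=
  L (gam L f f) x / 2 - gam L f (L f) x

/-- `e` is a complete list of the eigenvalues of `L` : there is a corresponding eigenbasis
which is orthonormal with respect to the inner product weighted by `m`. -/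
def IsEigenBasis {n : ℕ} {W : Type*} [Fintype W] (m : W → ℝ)
    (L : (W → ℝ) → (W → ℝ)) (e : Fin n → ℝ) : Prop :=
  ∃ φ : Fin n → W → ℝ,
    (∀ i j, (∑ x, φ i x * φ j x * m x) = if i = j then 1 else 0) ∧
    ∀ i, L (φ i) = fun x => e i * φ i x

/-! Let `K` be the matrix of `-Δ` and let `t i = ∑ x ∈ B, φ i x ^ 2 * m x` be the mass on `B` of the
`i`-th normalized eigenfunction, so that `0 ≤ t ≤ 1` and `∑ t = |B|`. Expanding traces of `K`,
`K ^ 2` and of their restrictions to `Ω` in the two eigenbases gives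
`∑ μ = ∑ μ t + ∑ λ` and `∑ μ² = ∑ μ² t + ∑ λ² + P`, with `P = ∑_{x ∈ Ω, z ∈ B} K x z * K z x > 0`
because some boundary vertex has an interior neighbour. If `μ (i + |B|) = λ i` for all `i`, the first
identity says that the `|B|` smallest eigenvalues sum to `∑ μ t`. Since `μ` is increasing and `t` is
a fractional indicator of total mass `|B|`, this equality case of the bathtub inequality forces `t`
to agree with the indicator of the first `|B|` indices except where `μ` equals the threshold value;
hence the same identity holds for `μ²`, and `P = 0`. -/

open Matrix

section OrthonormalEigenbasis

variable {W : Type*} [Fintype W] [DecidableEq W] {m : W → ℝ} {φ : Fin (Fintype.card W) → W → ℝ}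

theorem mul_eq_one_of_orthonormal
    (hφ : ∀ i j, ∑ x, φ i x * φ j x * m x = if i = j then 1 else 0) :
    (of fun x i => φ i x : Matrix W _ ℝ) * (of fun i y => φ i y * m y) = 1 := by
  refine (mul_eq_one_comm_of_equiv (R := ℝ) (Fintype.equivFin W).symm).mp ?_
  ext i j
  simp only [mul_apply, of_apply, one_apply, ← hφ]
  exact Finset.sum_congr rfl fun x _ => by ring

theorem sum_mul_mul_eq_ite_of_orthonormal
    (hφ : ∀ i j, ∑ x, φ i x * φ j x * m x = if i = j then 1 else 0) (x y : W) :
    ∑ i, φ i x * φ i y * m y = if x = y then 1 else 0 := by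
  simpa only [mul_apply, of_apply, one_apply, mul_assoc] using
    congrFun (congrFun (mul_eq_one_of_orthonormal hφ) x) y

theorem pow_apply_eq_sum_of_orthonormal {K : Matrix W W ℝ} {μ : Fin (Fintype.card W) → ℝ}
    (hφ : ∀ i j, ∑ x, φ i x * φ j x * m x = if i = j then 1 else 0)
    (hK : ∀ i, K *ᵥ φ i = μ i • φ i) (p : ℕ) (x y : W) :
    (K ^ p) x y = ∑ i, μ i ^ p * (φ i x * φ i y * m y) := by
  set Φ : Matrix W _ ℝ := of fun x i => φ i x
  set Ψ : Matrix _ W ℝ := of fun i y => φ i y * m y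
  have hKΦ : K * Φ = Φ * diagonal μ := by
    ext x i
    rw [mul_diagonal]
    simpa [mul_apply, mulVec, dotProduct, Φ, mul_comm] using congrFun (hK i) x
  have hpow : K ^ p * Φ = Φ * diagonal (μ ^ p) := by
    induction p with
    | zero => simp
    | succ p ih =>
      rw [pow_succ', Matrix.mul_assoc, ih, ← Matrix.mul_assoc, hKΦ, Matrix.mul_assoc,
        diagonal_mul_diagonal, pow_succ']
      rfl
  have hK_eq : K ^ p = Φ * diagonal (μ ^ p) * Ψ := by
    rw [← hpow, Matrix.mul_assoc, mul_eq_one_of_orthonormal hφ, Matrix.mul_one]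
  rw [hK_eq, mul_apply]
  exact Finset.sum_congr rfl fun i _ => by simp only [mul_diagonal, of_apply, Pi.pow_apply, Φ, Ψ]; ring

theorem sum_diag_pow_eq_of_orthonormal {K : Matrix W W ℝ} {μ : Fin (Fintype.card W) → ℝ}
    (hφ : ∀ i j, ∑ x, φ i x * φ j x * m x = if i = j then 1 else 0)
    (hK : ∀ i, K *ᵥ φ i = μ i • φ i) (p : ℕ) (S : Finset W) :
    ∑ x ∈ S, (K ^ p) x x = ∑ i, μ i ^ p * ∑ x ∈ S, φ i x * φ i x * m x := by
  simp_rw [pow_apply_eq_sum_of_orthonormal hφ hK, Finset.mul_sum]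
  exact Finset.sum_comm

theorem trace_pow_eq_of_orthonormal {K : Matrix W W ℝ} {μ : Fin (Fintype.card W) → ℝ}
    (hφ : ∀ i j, ∑ x, φ i x * φ j x * m x = if i = j then 1 else 0)
    (hK : ∀ i, K *ᵥ φ i = μ i • φ i) (p : ℕ) :
    trace (K ^ p) = ∑ i, μ i ^ p := by
  simpa [trace, hφ] using sum_diag_pow_eq_of_orthonormal hφ hK p Finset.univ

theorem sum_sum_mul_self_eq_card_of_orthonormal
    (hφ : ∀ i j, ∑ x, φ i x * φ j x * m x = if i = j then 1 else 0) (S : Finset W) :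
    ∑ i, ∑ x ∈ S, φ i x * φ i x * m x = S.card := by
  rw [Finset.sum_comm, Finset.card_eq_sum_ones, Nat.cast_sum]
  exact Finset.sum_congr rfl fun x _ => by simp [sum_mul_mul_eq_ite_of_orthonormal hφ]

omit [DecidableEq W] in
theorem sum_mul_self_le_one_of_orthonormal (hm : ∀ x, 0 ≤ m x)
    (hφ : ∀ i j, ∑ x, φ i x * φ j x * m x = if i = j then 1 else 0) (i) (S : Finset W) :
    ∑ x ∈ S, φ i x * φ i x * m x ≤ 1 := by
  simpa [hφ] using Finset.sum_le_sum_of_subset_of_nonneg (Finset.subset_univ S)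
    fun x _ _ => mul_nonneg (mul_self_nonneg (φ i x)) (hm x)

end OrthonormalEigenbasis

section BlockTrace

variable {V : Type*} [Fintype V] [DecidableEq V] (K : Matrix V V ℝ) (B : Finset V)

theorem trace_eq_sum_add_trace_submatrix :
    trace K = ∑ x ∈ B, K x x + trace (K.submatrix (Subtype.val : {x // x ∉ B} → V) Subtype.val) := by
  simp only [trace, diag_apply, submatrix_apply]
  rw [← Finset.sum_subtype Bᶜ (fun _ => Finset.mem_compl) fun x => K x x]
  exact (Finset.sum_add_sum_compl B _).symm

theorem trace_sq_eq_sum_add_trace_submatrix :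
    trace (K ^ 2) = ∑ x ∈ B, (K ^ 2) x x
      + trace (K.submatrix (Subtype.val : {x // x ∉ B} → V) Subtype.val ^ 2)
      + ∑ x : {x // x ∉ B}, ∑ z ∈ B, K x z * K z x := by
  rw [sq, sq, trace_eq_sum_add_trace_submatrix _ B, add_assoc]
  congr 1
  simp only [trace, diag_apply, submatrix_apply, mul_apply, ← Finset.sum_add_distrib]
  refine Finset.sum_congr rfl fun x _ => ?_
  rw [add_comm, ← Finset.sum_subtype Bᶜ (fun _ => Finset.mem_compl) fun z => K x z * K z x]
  exact (Finset.sum_add_sum_compl B _).symm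

end BlockTrace

section WeightedLaplacian

variable {V : Type*} [Fintype V] [DecidableEq V] (m : V → ℝ) (w : V → V → ℝ)

def weightedLapMatrix : Matrix V V ℝ :=
  diagonal (fun x => 1 / m x * ∑ y, w x y) - of fun x y => 1 / m x * w x y

theorem glap_eq_neg_mulVec (u : V → ℝ) : glap m w u = -(weightedLapMatrix m w *ᵥ u) := by
  ext x
  rw [Pi.neg_apply, weightedLapMatrix, sub_mulVec, Pi.sub_apply, mulVec_diagonal, glap]
  simp only [mulVec, dotProduct, of_apply, Finset.mul_sum, Finset.sum_mul, ← Finset.sum_sub_distrib,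
    ← Finset.sum_neg_distrib]
  exact Finset.sum_congr rfl fun y _ => by ring

theorem dotProduct_E0 (B : Finset V) (f : V → ℝ) (u : {x // x ∉ B} → ℝ) :
    f ⬝ᵥ E0 B u = (fun y : {x // x ∉ B} => f y) ⬝ᵥ u := by
  rw [dotProduct, ← Finset.sum_compl_add_sum B, Finset.sum_eq_zero (s := B) fun y hy => by
      simp [E0, hy], add_zero, Finset.sum_subtype Bᶜ (fun _ => Finset.mem_compl)]
  exact Finset.sum_congr rfl fun y _ => by simp [E0, y.2]

theorem dlap_eq_neg_mulVec (B : Finset V) (u : {x // x ∉ B} → ℝ) :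
    dlap m w B u = -((weightedLapMatrix m w).submatrix Subtype.val Subtype.val *ᵥ u) := by
  ext x
  simp only [dlap, glap_eq_neg_mulVec, Pi.neg_apply, mulVec, dotProduct_E0]
  rfl

variable {m w}

theorem weightedLapMatrix_mul_apply_of_ne (hw : ∀ x y, w x y = w y x) {x y : V} (h : x ≠ y) :
    weightedLapMatrix m w x y * weightedLapMatrix m w y x = w x y ^ 2 / (m x * m y) := by
  simp only [weightedLapMatrix, Matrix.sub_apply, diagonal_apply_ne _ h, diagonal_apply_ne _ h.symm,
    of_apply, zero_sub, neg_mul_neg, hw y x]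
  ring

theorem sum_sum_weightedLapMatrix_mul_pos (hm : ∀ x, 0 < m x) (hw : ∀ x y, w x y = w y x)
    {B : Finset V} {x y : V} (hx : x ∈ B) (hy : y ∉ B) (hxy : w x y ≠ 0) :
    0 < ∑ y : {y // y ∉ B}, ∑ x ∈ B, weightedLapMatrix m w y x * weightedLapMatrix m w x y := by
  have hnonneg : ∀ y : {y // y ∉ B}, ∀ x ∈ B,
      0 ≤ weightedLapMatrix m w y x * weightedLapMatrix m w x y := fun y x hx => by
    rw [weightedLapMatrix_mul_apply_of_ne hw (ne_of_mem_of_not_mem hx y.2).symm]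
    exact div_nonneg (sq_nonneg _) (mul_pos (hm y) (hm x)).le
  refine Finset.sum_pos' (fun y _ => Finset.sum_nonneg (hnonneg y)) ⟨⟨y, hy⟩, Finset.mem_univ _, ?_⟩
  refine Finset.sum_pos' (hnonneg _) ⟨x, hx, ?_⟩
  rw [weightedLapMatrix_mul_apply_of_ne hw (ne_of_mem_of_not_mem hx hy).symm, hw]
  exact div_pos (sq_pos_of_ne_zero hxy) (mul_pos (hm y) (hm x))

end WeightedLaplacian

section Bathtub

variable {ι : Type*} [Fintype ι] [DecidableEq ι] (S : Finset ι)

theorem sum_sub_sum_mul_eq (t f : ι → ℝ) :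
    ∑ i ∈ S, f i - ∑ i, f i * t i = ∑ i ∈ S, f i * (1 - t i) - ∑ i ∈ Sᶜ, f i * t i := by
  rw [← Finset.sum_add_sum_compl S fun i => f i * t i]
  simp only [mul_sub, mul_one, Finset.sum_sub_distrib]
  ring

theorem sum_comp_eq_sum_comp_mul_of_sum_eq {μ t : ι → ℝ} {c : ℝ}
    (hlo : ∀ i ∈ S, μ i ≤ c) (hhi : ∀ i ∉ S, c ≤ μ i) (ht0 : ∀ i, 0 ≤ t i) (ht1 : ∀ i, t i ≤ 1)
    (hts : ∑ i, t i = S.card) (h : ∑ i ∈ S, μ i = ∑ i, μ i * t i) (g : ℝ → ℝ) :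
    ∑ i ∈ S, g (μ i) = ∑ i, g (μ i) * t i := by
  have hconst : ∀ a : ℝ, ∑ i ∈ S, a - ∑ i, a * t i = 0 := fun a => by
    simp [← Finset.mul_sum, hts, mul_comm]
  have hS : ∀ i ∈ S, 0 ≤ (c - μ i) * (1 - t i) := fun i hi =>
    mul_nonneg (sub_nonneg.2 (hlo i hi)) (sub_nonneg.2 (ht1 i))
  have hSc : ∀ i ∈ Sᶜ, 0 ≤ (μ i - c) * t i := fun i hi =>
    mul_nonneg (sub_nonneg.2 (hhi i (Finset.mem_compl.1 hi))) (ht0 i)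
  -- Two sums of nonnegative terms add up to zero, so off the threshold value `c` the weight `t`
  -- is the indicator of `S`.
  have hsum : ∑ i ∈ S, (c - μ i) * (1 - t i) + ∑ i ∈ Sᶜ, (μ i - c) * t i = 0 := by
    have key := sum_sub_sum_mul_eq S t fun i => c - μ i
    have hleft : ∑ i ∈ S, (c - μ i) - ∑ i, (c - μ i) * t i = 0 := by
      simp only [Finset.sum_sub_distrib, sub_mul]
      linarith [hconst c]
    have hneg : ∑ i ∈ Sᶜ, (μ i - c) * t i = -∑ i ∈ Sᶜ, (c - μ i) * t i := by
      rw [← Finset.sum_neg_distrib]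
      exact Finset.sum_congr rfl fun i _ => by ring
    linarith
  have hS0 := (Finset.sum_eq_zero_iff_of_nonneg hS).1
    (le_antisymm (by linarith [Finset.sum_nonneg hSc]) (Finset.sum_nonneg hS))
  have hSc0 := (Finset.sum_eq_zero_iff_of_nonneg hSc).1
    (le_antisymm (by linarith [Finset.sum_nonneg hS]) (Finset.sum_nonneg hSc))
  have hgS : ∀ i ∈ S, g (μ i) * (1 - t i) = g c * (1 - t i) := fun i hi => by
    rcases mul_eq_zero.1 (hS0 i hi) with h | h
    · rw [sub_eq_zero.1 h]
    · rw [h, mul_zero, mul_zero]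
  have hgSc : ∀ i ∈ Sᶜ, g (μ i) * t i = g c * t i := fun i hi => by
    rcases mul_eq_zero.1 (hSc0 i hi) with h | h
    · rw [sub_eq_zero.1 h]
    · rw [h, mul_zero, mul_zero]
  rw [← sub_eq_zero, sum_sub_sum_mul_eq, Finset.sum_congr rfl hgS, Finset.sum_congr rfl hgSc,
    ← sum_sub_sum_mul_eq S t fun _ => g c]
  exact hconst (g c)

end Bathtub

theorem Fin.sum_filter_not_lt_eq {M : Type*} [AddCommMonoid M] {N n k : ℕ} (hN : n + k = N)
    (f : Fin N → M) :
    ∑ i with ¬ i.1 < k, f i = ∑ j : Fin n, f ⟨j + k, by omega⟩ := by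
  subst hN
  refine (Finset.sum_nbij (fun j : Fin n => (⟨j + k, by omega⟩ : Fin (n + k))) ?_ ?_ ?_
    fun _ _ => rfl).symm
  · intro j _
    simp
  · intro j _ j' _ h
    simpa [Fin.ext_iff] using h
  · intro i hi
    simp only [Finset.coe_filter, Finset.mem_univ, true_and, Set.mem_ofPred_eq, not_lt] at hi
    exact ⟨⟨i - k, by omega⟩, by simp, Fin.ext (show i - k + k = i by omega)⟩

theorem sum_sq_eq_of_tail_eq {N n k : ℕ} (hN : n + k = N) (hk : 0 < k) {μ t : Fin N → ℝ}
    (hμ : Monotone μ) (ht0 : ∀ i, 0 ≤ t i) (ht1 : ∀ i, t i ≤ 1) (hts : ∑ i, t i = k)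
    {lam : Fin n → ℝ} (htail : ∀ j : Fin n, μ ⟨j + k, by omega⟩ = lam j)
    (hsum : ∑ i, μ i = ∑ i, μ i * t i + ∑ j, lam j) :
    ∑ i, μ i ^ 2 = ∑ i, μ i ^ 2 * t i + ∑ j, lam j ^ 2 := by
  set S : Finset (Fin N) := {i | i.1 < k}
  have hsplit (f : Fin N → ℝ) : ∑ i, f i = ∑ i ∈ S, f i + ∑ j : Fin n, f ⟨j + k, by omega⟩ := by
    rw [← Fin.sum_filter_not_lt_eq hN, Finset.sum_filter_add_sum_filter_not]
  have hcard : (#S : ℝ) = k := by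
    have h := hsplit fun _ => 1
    simp only [Finset.sum_const, Finset.card_univ, Fintype.card_fin, nsmul_eq_mul, mul_one] at h
    have hN' : (N : ℝ) = n + k := by exact_mod_cast hN.symm
    linarith
  set c := μ ⟨k - 1, by omega⟩
  have hlo : ∀ i ∈ S, μ i ≤ c := fun i hi => hμ <| Fin.le_def.2 <| show i.1 ≤ k - 1 by
    simp only [S, Finset.mem_filter, Finset.mem_univ, true_and] at hi
    omega
  have hhi : ∀ i ∉ S, c ≤ μ i := fun i hi => hμ <| Fin.le_def.2 <| show k - 1 ≤ i.1 by
    simp only [S, Finset.mem_filter, Finset.mem_univ, true_and] at hi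
    omega
  have htail_sum : ∑ j : Fin n, μ ⟨j + k, by omega⟩ = ∑ j, lam j := Fintype.sum_congr _ _ htail
  have hbath := sum_comp_eq_sum_comp_mul_of_sum_eq S hlo hhi ht0 ht1 (hts.trans hcard.symm)
    (by linarith [hsplit μ]) (· ^ 2)
  rw [hsplit fun i => μ i ^ 2, hbath]
  simp only [htail]

theorem stmt_13 {V : Type*} [Fintype V] [DecidableEq V]
    (G : SimpleGraph V)
    (m : V → ℝ) (hm : ∀ x, 0 < m x)
    (w : V → V → ℝ) (hwsymm : ∀ x y, w x y = w y x)
    (hwpos : ∀ x y, G.Adj x y → 0 < w x y)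
    (B : Finset V) (hB : B.Nonempty)
    (hBint : ∀ x ∈ B, ∃ y, y ∉ B ∧ G.Adj x y)
    (μ : Fin (Fintype.card V) → ℝ) (hμmono : Monotone μ)
    (hμ : IsEigenBasis m (glap m w) (fun i => -(μ i)))
    (lam : Fin (Fintype.card {x : V // x ∉ B}) → ℝ)
    (hlam : IsEigenBasis (fun x : {x : V // x ∉ B} => m x.1) (dlap m w B) (fun i => -(lam i)))
    (hcard : Fintype.card {x : V // x ∉ B} + B.card = Fintype.card V)
    :
    ¬ (∀ i : Fin (Fintype.card {x : V // x ∉ B}), μ ⟨i.1 + B.card, by have h2 := i.2; omega⟩ = lam i) := by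
  intro H
  obtain ⟨φ, hφ, hφK⟩ := hμ
  obtain ⟨ψ, hψ, hψK⟩ := hlam
  set K := weightedLapMatrix m w
  have hK (i) : K *ᵥ φ i = μ i • φ i := by
    simpa [glap_eq_neg_mulVec, funext_iff] using hφK i
  have hKΩ (i) : K.submatrix Subtype.val Subtype.val *ᵥ ψ i = lam i • ψ i := by
    simpa [dlap_eq_neg_mulVec, funext_iff] using hψK i
  have htrace := trace_eq_sum_add_trace_submatrix K B
  have htrace_sq := trace_sq_eq_sum_add_trace_submatrix K B
  have hsum : ∑ i, μ i = ∑ i, μ i * (∑ x ∈ B, φ i x * φ i x * m x) + ∑ j, lam j := by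
    have hB1 := sum_diag_pow_eq_of_orthonormal hφ hK 1 B
    have hV1 := trace_pow_eq_of_orthonormal hφ hK 1
    have hΩ1 := trace_pow_eq_of_orthonormal hψ hKΩ 1
    simp only [pow_one] at hB1 hV1 hΩ1
    linarith
  have hsum_sq := sum_sq_eq_of_tail_eq hcard hB.card_pos hμmono
    (fun i => Finset.sum_nonneg fun x _ => mul_nonneg (mul_self_nonneg _) (hm x).le)
    (fun i => sum_mul_self_le_one_of_orthonormal (fun x => (hm x).le) hφ i B)
    (sum_sum_mul_self_eq_card_of_orthonormal hφ B) H hsum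
  obtain ⟨x, hx⟩ := hB
  obtain ⟨y, hy, hxy⟩ := hBint x hx
  have hcross := sum_sum_weightedLapMatrix_mul_pos hm hwsymm hx hy (hwpos x y hxy).ne'
  linarith [sum_diag_pow_eq_of_orthonormal hφ hK 2 B, trace_pow_eq_of_orthonormal hφ hK 2,
    trace_pow_eq_of_orthonormal hψ hKΩ 2]
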